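/- arXiv:1007.1957 — 3 statements merged into one kernel-verified Lean document; each statement's English description precedes it below -/
import Mathlib

section
/- Let s < 1. Then almost surely sup_{n∈ℤ∖{0}} ⟨n⟩^{s} |n|^{−1} |g_n| < ∞; that is, the Fourier–Wiener series u belongs almost surely to 𝓕L^{s,∞}(𝕋) (equivalently, to M^{p,∞}_s(𝕋) for every 1 ≤ p ≤ ∞). -/
/-!
The real and imaginary parts of each `gₙ` are standard Gaussians, hence `1`-sub-Gaussian, and the
Chernoff bound gives `P(|Re gₙ| ≥ T) ≤ 2 exp(-T²/2)`. Fix `s' ∈ [0, 1)` with `s ≤ s'`. For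
`Tₙ = |n|^(1-s')` these tails are summable, so by Borel–Cantelli, almost surely
`|Re gₙ|, |Im gₙ| < Tₙ` for all but finitely many `n`. Since `⟨n⟩^s ≤ 2^(s'/2) |n|^s'`, the weighted
coefficients `⟨n⟩^s |n|⁻¹ |gₙ|` are then bounded by `2^(1 + s'/2)` outside a finite set.
-/

open MeasureTheory ProbabilityTheory Filter

noncomputable section

/-- The family `(gₙ)_{n ∈ ℤ ∖ {0}}` is a family of independent standard complex-valued
Gaussian random variables: writing `gₙ = aₙ + i bₙ`, all the real and imaginary parts
`aₙ, bₙ` (for `n ≠ 0`) are mutually independent standard real `N(0,1)` Gaussians. -/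
def IsStdComplexGaussianFamily {Ω : Type*} [MeasurableSpace Ω] (P : Measure Ω)
    (g : ℤ → Ω → ℂ) : Prop :=
  iIndepFun (fun i : {n : ℤ // n ≠ 0} × Bool => fun ω =>
      if i.2 then (g (i.1 : ℤ) ω).re else (g (i.1 : ℤ) ω).im) P ∧
  ∀ i : {n : ℤ // n ≠ 0} × Bool,
    P.map (fun ω => if i.2 then (g (i.1 : ℤ) ω).re else (g (i.1 : ℤ) ω).im)
      = gaussianReal 0 1

open Real

namespace ProbabilityTheory

variable {Ω : Type*} [MeasurableSpace Ω] {P : Measure Ω}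

lemma hasSubgaussianMGF_of_map_eq_gaussianReal {X : Ω → ℝ} {v : NNReal}
    (hX : P.map X = gaussianReal 0 v) : HasSubgaussianMGF X v P := by
  have hXm : AEMeasurable X P := aemeasurable_of_map_neZero (by rw [hX]; infer_instance)
  refine (HasSubgaussianMGF.id_map_iff hXm).1 ?_
  rw [hX]
  exact ⟨integrable_exp_mul_gaussianReal, fun t => by simp [mgf_id_gaussianReal]⟩

lemma HasSubgaussianMGF.measure_abs_ge_le {X : Ω → ℝ} {c : NNReal}
    (h : HasSubgaussianMGF X c P) {ε : ℝ} (hε : 0 ≤ ε) :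
    P.real {ω | ε ≤ |X ω|} ≤ 2 * exp (-ε ^ 2 / (2 * c)) := by
  have hset : {ω | ε ≤ |X ω|} = {ω | ε ≤ X ω} ∪ {ω | ε ≤ (-X) ω} := by
    ext ω; simp [le_abs]
  calc P.real {ω | ε ≤ |X ω|} ≤ P.real {ω | ε ≤ X ω} + P.real {ω | ε ≤ (-X) ω} := by
        rw [hset]; exact measureReal_union_le _ _
    _ ≤ _ := by linarith [h.measure_ge_le hε, h.neg.measure_ge_le hε]

lemma ae_eventually_abs_lt_of_hasSubgaussianMGF [IsFiniteMeasure P] {ι : Type*} [Countable ι]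
    {X : ι → Ω → ℝ} {c : NNReal} (hX : ∀ i, HasSubgaussianMGF (X i) c P) {T : ι → ℝ}
    (hT0 : ∀ i, 0 ≤ T i) (hT : Summable fun i => exp (-T i ^ 2 / (2 * c))) :
    ∀ᵐ ω ∂P, ∀ᶠ i in cofinite, |X i ω| < T i := by
  have hsum : ∑' i, P {ω | T i ≤ |X i ω|} ≠ ⊤ := by
    refine ne_top_of_le_ne_top (ENNReal.ofReal_ne_top (r := ∑' i, 2 * exp (-T i ^ 2 / (2 * c)))) ?_
    rw [ENNReal.ofReal_tsum_of_nonneg (fun i => by positivity) (hT.mul_left 2)]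
    refine ENNReal.tsum_le_tsum fun i => ?_
    rw [← ofReal_measureReal]
    exact ENNReal.ofReal_le_ofReal ((hX i).measure_abs_ge_le (hT0 i))
  filter_upwards [ae_finite_setOfPred_mem hsum] with ω hω
  simpa [Filter.eventually_cofinite] using hω

end ProbabilityTheory

lemma summable_exp_neg_mul_abs_rpow {a c : ℝ} (ha : 0 < a) (hc : 0 < c) :
    Summable fun n : ℤ => exp (-c * |(n : ℝ)| ^ a) := by
  have hnorm : Tendsto (fun n : ℤ => |(n : ℝ)| ^ a) cofinite atTop :=
    (tendsto_rpow_atTop ha).comp (tendsto_norm_cocompact_atTop.comp Int.tendsto_coe_cofinite)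
  refine summable_of_isBigO (Real.summable_abs_int_rpow one_lt_two) ?_
  refine ((isLittleO_exp_neg_mul_rpow_atTop hc (-2 / a)).comp_tendsto hnorm).isBigO.congr_right
    fun n => ?_
  rw [Function.comp_apply, ← rpow_mul (abs_nonneg _)]
  field_simp

lemma one_add_sq_rpow_le {x s s' : ℝ} (hx : 1 ≤ |x|) (hss' : s ≤ s') (hs' : 0 ≤ s') :
    (1 + x ^ 2) ^ (s / 2) ≤ 2 ^ (s' / 2) * |x| ^ s' := by
  have hx2 : 1 ≤ |x| ^ 2 := one_le_pow₀ hx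
  rw [← sq_abs x]
  calc (1 + |x| ^ 2) ^ (s / 2) ≤ (1 + |x| ^ 2) ^ (s' / 2) :=
        rpow_le_rpow_of_exponent_le (by linarith) (by linarith)
    _ ≤ (2 * |x| ^ 2) ^ (s' / 2) := rpow_le_rpow (by positivity) (by linarith) (by positivity)
    _ = 2 ^ (s' / 2) * |x| ^ s' := by
        rw [mul_rpow zero_le_two (by positivity), ← rpow_natCast, ← rpow_mul (abs_nonneg x),
          Nat.cast_ofNat, mul_div_cancel₀ _ two_ne_zero]

lemma one_add_sq_rpow_mul_inv_mul_norm_le {x s s' : ℝ} (hx : 1 ≤ |x|) (hss' : s ≤ s')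
    (hs' : 0 ≤ s') {z : ℂ} (hre : |z.re| < |x| ^ (1 - s')) (him : |z.im| < |x| ^ (1 - s')) :
    (1 + x ^ 2) ^ (s / 2) * |x|⁻¹ * ‖z‖ ≤ 2 * 2 ^ (s' / 2) := by
  have hx0 : 0 < |x| := by linarith
  have hz : ‖z‖ ≤ 2 * |x| ^ (1 - s') := (Complex.norm_le_abs_re_add_abs_im z).trans (by linarith)
  calc (1 + x ^ 2) ^ (s / 2) * |x|⁻¹ * ‖z‖
      ≤ 2 ^ (s' / 2) * |x| ^ s' * |x|⁻¹ * (2 * |x| ^ (1 - s')) := by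
        gcongr
        exact one_add_sq_rpow_le hx hss' hs'
    _ = 2 * 2 ^ (s' / 2) * (|x| ^ s' * |x| ^ (1 - s') * |x|⁻¹) := by ring
    _ = 2 * 2 ^ (s' / 2) := by
        rw [← rpow_add hx0, add_sub_cancel, rpow_one, mul_inv_cancel₀ hx0.ne', mul_one]

/-- If `s < 1`, then almost surely `sup_{n ≠ 0} ⟨n⟩^s |n|⁻¹ |gₙ| < ∞`, i.e. the
Fourier–Wiener series belongs a.s. to `𝓕L^{s,∞}(𝕋) = M^{p,∞}_s(𝕋)`. -/
theorem brownian_in_FourierLebesgue_qInfty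
    {Ω : Type*} [MeasurableSpace Ω] (P : Measure Ω) [IsProbabilityMeasure P]
    (g : ℤ → Ω → ℂ) (hg : IsStdComplexGaussianFamily P g)
    (s : ℝ) (hs : s < 1) :
    ∀ᵐ ω ∂P,
      BddAbove (Set.range fun n : {n : ℤ // n ≠ 0} =>
        (1 + ((n : ℤ) : ℝ) ^ 2) ^ (s / 2) * |((n : ℤ) : ℝ)|⁻¹
          * ‖g (n : ℤ) ω‖) := by
  obtain ⟨s', hss', hs'0, hs'1⟩ : ∃ s', s ≤ s' ∧ 0 ≤ s' ∧ s' < 1 :=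
    ⟨max s 0, le_max_left _ _, le_max_right _ _, max_lt hs one_pos⟩
  set T : {n : ℤ // n ≠ 0} → ℝ := fun n => |((n : ℤ) : ℝ)| ^ (1 - s')
  have hT : Summable fun n => exp (-T n ^ 2 / (2 * ((1 : NNReal) : ℝ))) := by
    refine ((summable_exp_neg_mul_abs_rpow (a := 2 * (1 - s')) (c := 1 / 2) (by linarith)
      (by norm_num)).subtype _).congr fun n => ?_
    simp only [T, Function.comp_apply, NNReal.coe_one, ← rpow_natCast, ← rpow_mul (abs_nonneg _)]
    ring_nf
  have hpart (b : Bool) := ae_eventually_abs_lt_of_hasSubgaussianMGF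
    (fun n => hasSubgaussianMGF_of_map_eq_gaussianReal (hg.2 (n, b))) (fun n => by positivity) hT
  filter_upwards [hpart true, hpart false] with ω hre him
  refine (isBoundedUnder_of_eventually_le (a := 2 * 2 ^ (s' / 2)) ?_).bddAbove_range_of_cofinite
  filter_upwards [hre, him] with n hn_re hn_im
  have hn : (1 : ℝ) ≤ |((n : ℤ) : ℝ)| := by exact_mod_cast Int.one_le_abs n.2
  exact one_add_sq_rpow_mul_inv_mul_norm_le hn hss' hs'0 hn_re hn_im
end
end

section
/- Let 1 ≤ p < ∞, 1 ≤ q ≤ ∞ and s ∈ ℝ with (s−1)p < −1. Then almost surely ‖u‖_{b̂^s_{p,q}(𝕋)} = ( Σ_{j≥0} ( Σ_{|n|∼2^j} ⟨n⟩^{sp} |n|^{−p} |g_n|^p )^{q/p} )^{1/q} < ∞ (with the ℓ^q sum over j replaced by a supremum when q = ∞); that is, the Fourier–Wiener series u belongs almost surely to the Fourier–Besov space b̂^s_{p,q}(𝕋). -/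
open MeasureTheory ProbabilityTheory Filter

noncomputable section

/-- The dyadic block `{n ∈ ℤ : 2^{j-1} < |n| ≤ 2^j}` (i.e. `|n| ∼ 2^j`). -/
def dyadicBlock (j : ℕ) : Finset ℤ :=
  (Finset.Icc (-(2 ^ j : ℤ)) (2 ^ j)).filter fun n => (2 : ℤ) ^ j < 2 * |n| ∧ |n| ≤ 2 ^ j

/-- The `j`-th block piece of the Fourier–Besov norm of the Fourier–Wiener series:
`( Σ_{|n| ∼ 2^j} ⟨n⟩^{sp} |n|^{-p} aₙ^p )^{1/p}`, where `aₙ = |gₙ(ω)|`. -/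
def fbBlock (a : ℤ → ℝ) (p s : ℝ) (j : ℕ) : ℝ :=
  (∑ n ∈ dyadicBlock j,
      (1 + (n : ℝ) ^ 2) ^ (s * p / 2) * |(n : ℝ)| ^ (-p) * a n ^ p) ^ (1 / p)

/-- The Fourier–Besov `b̂^s_{p,q}(𝕋)` norm of the Fourier–Wiener series, as an
`ℝ≥0∞`-valued quantity: `‖ fbBlock a p s j ‖_{ℓ^q_j}`, with the usual supremum
modification when `q = ∞`. -/
def fbNorm (a : ℤ → ℝ) (p s : ℝ) (q : ENNReal) : ENNReal :=
  if q = ⊤ then ⨆ j : ℕ, ENNReal.ofReal (fbBlock a p s j)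
  else (∑' j : ℕ, ENNReal.ofReal (fbBlock a p s j) ^ q.toReal) ^ (1 / q.toReal)
/-!
Fix `ε > 0` with `(s - 1) p + ε < -1`. The weights `⟨n⟩^{sp} |n|^{-p} |n|^ε` are summable, and
`𝔼 |gₙ|^p ≤ 2^p 𝔼 |N(0,1)|^p` uniformly in `n` because `|gₙ| ≤ |aₙ| + |bₙ|`; by Tonelli the
random series `Σₙ ⟨n⟩^{sp} |n|^{-p} |n|^ε |gₙ|^p` has finite expectation, so it is almost surely
finite. For such an `ω`, the factor `|n|^ε ≳ 2^{jε}` on the `j`-th dyadic block makes the block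
norms decay geometrically in `j`, so they lie in every `ℓ^q`.
-/

open scoped ENNReal

def fbWeight (p s : ℝ) (n : ℤ) : ℝ := (1 + (n : ℝ) ^ 2) ^ (s * p / 2) * |(n : ℝ)| ^ (-p)

lemma fbWeight_nonneg (p s : ℝ) (n : ℤ) : 0 ≤ fbWeight p s n := by
  unfold fbWeight; positivity

/-- The paper excludes the frequency `n = 0`; the weight vanishes there since `0 ^ (-p) = 0`. -/
lemma fbWeight_zero {p : ℝ} (hp : p ≠ 0) (s : ℝ) : fbWeight p s 0 = 0 := by
  simp [fbWeight, Real.zero_rpow (neg_ne_zero.mpr hp)]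

lemma fbBlock_eq (a : ℤ → ℝ) (p s : ℝ) (j : ℕ) :
    fbBlock a p s j = (∑ n ∈ dyadicBlock j, fbWeight p s n * a n ^ p) ^ (1 / p) := rfl

lemma one_add_rpow_le_two_rpow_abs_mul_rpow {x : ℝ} (hx : 1 ≤ x) (a : ℝ) :
    (1 + x) ^ a ≤ 2 ^ |a| * x ^ a := by
  have hx0 : 0 < x := by linarith
  rcases le_total 0 a with ha | ha
  · calc (1 + x) ^ a ≤ (2 * x) ^ a := by gcongr; linarith
      _ = 2 ^ |a| * x ^ a := by rw [abs_of_nonneg ha, Real.mul_rpow zero_le_two hx0.le]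
  · calc (1 + x) ^ a ≤ x ^ a := Real.rpow_le_rpow_of_nonpos hx0 (by linarith) ha
      _ ≤ 2 ^ |a| * x ^ a :=
        le_mul_of_one_le_left (by positivity) (Real.one_le_rpow one_le_two (abs_nonneg a))

lemma abs_rpow_mul_fbWeight_le {p : ℝ} (hp : p ≠ 0) (s ε : ℝ) (n : ℤ) :
    |(n : ℝ)| ^ ε * fbWeight p s n ≤ 2 ^ |s * p / 2| * |(n : ℝ)| ^ ((s - 1) * p + ε) := by
  rcases eq_or_ne n 0 with rfl | hn
  · rw [fbWeight_zero hp, mul_zero]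
    positivity
  have hn1 : 1 ≤ |(n : ℝ)| := by exact_mod_cast Int.one_le_abs hn
  have hn0 : 0 < |(n : ℝ)| := by linarith
  calc |(n : ℝ)| ^ ε * fbWeight p s n
      = (1 + |(n : ℝ)| ^ 2) ^ (s * p / 2) * |(n : ℝ)| ^ (ε - p) := by
        rw [fbWeight, sq_abs, sub_eq_add_neg, Real.rpow_add hn0]; ring
    _ ≤ 2 ^ |s * p / 2| * (|(n : ℝ)| ^ 2) ^ (s * p / 2) * |(n : ℝ)| ^ (ε - p) := by
        gcongr
        exact one_add_rpow_le_two_rpow_abs_mul_rpow (one_le_pow₀ hn1) _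
    _ = 2 ^ |s * p / 2| * |(n : ℝ)| ^ ((s - 1) * p + ε) := by
        rw [← Real.rpow_natCast, ← Real.rpow_mul hn0.le, mul_assoc, ← Real.rpow_add hn0]
        ring_nf

lemma summable_abs_rpow_mul_fbWeight {p s ε : ℝ} (hp : p ≠ 0) (h : (s - 1) * p + ε < -1) :
    Summable fun n : ℤ => |(n : ℝ)| ^ ε * fbWeight p s n := by
  refine Summable.of_nonneg_of_le (fun n => by have := fbWeight_nonneg p s n; positivity)
    (abs_rpow_mul_fbWeight_le hp s ε) (Summable.mul_left _ ?_)
  simpa using Real.summable_abs_int_rpow (b := -((s - 1) * p + ε)) (by linarith)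

lemma two_rpow_pow_le_of_mem_dyadicBlock {j : ℕ} {n : ℤ} (hn : n ∈ dyadicBlock j) {ε : ℝ}
    (hε : 0 ≤ ε) : ((2 : ℝ) ^ ε) ^ j ≤ 2 ^ ε * |(n : ℝ)| ^ ε := by
  have hlt : (2 : ℝ) ^ j < 2 * |(n : ℝ)| := by
    exact_mod_cast (Finset.mem_filter.mp hn).2.1
  rw [Real.rpow_pow_comm zero_le_two, ← Real.mul_rpow zero_le_two (abs_nonneg _)]
  gcongr

lemma two_rpow_pow_mul_sum_dyadicBlock_le {f : ℤ → ℝ} (hf : ∀ n, 0 ≤ f n) {ε : ℝ} (hε : 0 ≤ ε)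
    (hsum : Summable fun n : ℤ => |(n : ℝ)| ^ ε * f n) (j : ℕ) :
    ((2 : ℝ) ^ ε) ^ j * ∑ n ∈ dyadicBlock j, f n ≤ 2 ^ ε * ∑' n : ℤ, |(n : ℝ)| ^ ε * f n := by
  calc ((2 : ℝ) ^ ε) ^ j * ∑ n ∈ dyadicBlock j, f n
      ≤ ∑ n ∈ dyadicBlock j, 2 ^ ε * (|(n : ℝ)| ^ ε * f n) := by
        rw [Finset.mul_sum]
        refine Finset.sum_le_sum fun n hn => ?_
        rw [← mul_assoc]
        exact mul_le_mul_of_nonneg_right (two_rpow_pow_le_of_mem_dyadicBlock hn hε) (hf n)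
    _ ≤ 2 ^ ε * ∑' n : ℤ, |(n : ℝ)| ^ ε * f n := by
        rw [← Finset.mul_sum]
        gcongr
        exact hsum.sum_le_tsum _ fun n _ => by have := hf n; positivity

lemma ENNReal.tsum_rpow_ne_top_of_le_geometric {x : ℕ → ℝ≥0∞} {B r : ℝ≥0∞} {t : ℝ}
    (hB : B ≠ ⊤) (hr : r < 1) (ht : 0 < t) (h : ∀ j, x j ≤ B * r ^ j) :
    ∑' j, x j ^ t ≠ ⊤ := by
  have hrt : r ^ t < 1 := ENNReal.rpow_lt_one hr ht
  refine ne_top_of_le_ne_top ?_ (ENNReal.tsum_le_tsum fun j => ENNReal.rpow_le_rpow (h j) ht.le)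
  simp_rw [ENNReal.mul_rpow_of_nonneg _ _ ht.le, ← ENNReal.rpow_natCast, ← ENNReal.rpow_mul,
    mul_comm _ t, ENNReal.rpow_mul, ENNReal.rpow_natCast, ENNReal.tsum_mul_left,
    ENNReal.tsum_geometric]
  exact ENNReal.mul_ne_top (ENNReal.rpow_ne_top_of_nonneg ht.le hB)
    (ENNReal.inv_ne_top.mpr (tsub_pos_of_lt hrt).ne')

lemma fbNorm_lt_top_of_le_geometric {a : ℤ → ℝ} {p s B r : ℝ} {q : ℝ≥0∞} (hr0 : 0 ≤ r)
    (hr1 : r < 1) (hq : 0 < q) (h : ∀ j, fbBlock a p s j ≤ B * r ^ j) :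
    fbNorm a p s q < ⊤ := by
  have hle : ∀ j, ENNReal.ofReal (fbBlock a p s j) ≤ ENNReal.ofReal B * ENNReal.ofReal r ^ j :=
    fun j => by
      rw [← ENNReal.ofReal_pow hr0, ← ENNReal.ofReal_mul' (by positivity)]
      exact ENNReal.ofReal_le_ofReal (h j)
  unfold fbNorm
  split_ifs with hqt
  · refine lt_of_le_of_lt (iSup_le fun j => (hle j).trans ?_) (ENNReal.ofReal_lt_top (r := B))
    exact mul_le_of_le_one_right' (pow_le_one₀ zero_le (ENNReal.ofReal_lt_one.mpr hr1).le)
  · have ht : 0 < q.toReal := ENNReal.toReal_pos hq.ne' hqt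
    exact ENNReal.rpow_lt_top_of_nonneg (by positivity) <|
      ENNReal.tsum_rpow_ne_top_of_le_geometric ENNReal.ofReal_ne_top
        (ENNReal.ofReal_lt_one.mpr hr1) ht hle

lemma fbNorm_lt_top_of_summable {a : ℤ → ℝ} (ha : ∀ n, 0 ≤ a n) {p s ε : ℝ} {q : ℝ≥0∞}
    (hp : 0 < p) (hε : 0 < ε) (hq : 0 < q)
    (hsum : Summable fun n : ℤ => |(n : ℝ)| ^ ε * (fbWeight p s n * a n ^ p)) :
    fbNorm a p s q < ⊤ := by
  set T := ∑' n : ℤ, |(n : ℝ)| ^ ε * (fbWeight p s n * a n ^ p)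
  have hρ : 1 < (2 : ℝ) ^ ε := Real.one_lt_rpow one_lt_two hε
  have hterm (n : ℤ) : 0 ≤ fbWeight p s n * a n ^ p := by
    have := ha n; have := fbWeight_nonneg p s n; positivity
  have hblock (j : ℕ) : ∑ n ∈ dyadicBlock j, fbWeight p s n * a n ^ p
      ≤ 2 ^ ε * T * ((2 ^ ε)⁻¹) ^ j := by
    rw [inv_pow, ← div_eq_mul_inv, le_div_iff₀' (by positivity)]
    exact two_rpow_pow_mul_sum_dyadicBlock_le hterm hε.le hsum j
  refine fbNorm_lt_top_of_le_geometric (B := (2 ^ ε * T) ^ (1 / p))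
    (r := ((2 ^ ε)⁻¹) ^ (1 / p)) (by positivity)
    (Real.rpow_lt_one (by positivity) (inv_lt_one_of_one_lt₀ hρ) (by positivity)) hq fun j => ?_
  have hT : 0 ≤ T := tsum_nonneg fun n => by have := hterm n; positivity
  rw [fbBlock_eq, Real.rpow_pow_comm (by positivity), ← Real.mul_rpow (by positivity)
    (by positivity)]
  exact Real.rpow_le_rpow (Finset.sum_nonneg fun n _ => hterm n) (hblock j) (by positivity)

lemma lintegral_enorm_rpow_gaussianReal_lt_top (μ : ℝ) (v : NNReal) {p : ℝ} (hp : 0 < p) :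
    ∫⁻ x, ‖x‖ₑ ^ p ∂gaussianReal μ v < ⊤ := by
  have := (memLp_id_gaussianReal (μ := μ) (v := v) p.toNNReal).eLpNorm_lt_top
  rwa [eLpNorm_lt_top_iff_lintegral_rpow_enorm_lt_top (by simpa using hp) (by simp),
    ENNReal.coe_toReal, Real.coe_toNNReal _ hp.le] at this

section ComplexRandomVariable

variable {Ω : Type*} [MeasurableSpace Ω] {P : Measure Ω} {Z : Ω → ℂ} {ν : Measure ℝ} [NeZero ν]

lemma aemeasurable_of_map_eq {f : Ω → ℝ} (h : P.map f = ν) : AEMeasurable f P :=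
  aemeasurable_of_map_neZero (h ▸ inferInstance)

lemma aemeasurable_of_map_re_im (hre : P.map (fun ω => (Z ω).re) = ν)
    (him : P.map (fun ω => (Z ω).im) = ν) : AEMeasurable Z P := by
  have hre' := aemeasurable_of_map_eq hre
  have him' := aemeasurable_of_map_eq him
  rw [show Z = fun ω => ((Z ω).re : ℂ) + (Z ω).im * Complex.I from
    funext fun ω => (Complex.re_add_im _).symm]
  fun_prop

lemma lintegral_enorm_rpow_le_of_map_re_im {p : ℝ} (hp : 1 ≤ p)
    (hre : P.map (fun ω => (Z ω).re) = ν) (him : P.map (fun ω => (Z ω).im) = ν) :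
    ∫⁻ ω, ‖Z ω‖ₑ ^ p ∂P ≤ 2 ^ p * ∫⁻ x, ‖x‖ₑ ^ p ∂ν := by
  have hre' := aemeasurable_of_map_eq hre
  have him' := aemeasurable_of_map_eq him
  have hpt (z : ℂ) : ‖z‖ₑ ^ p ≤ 2 ^ (p - 1) * (‖z.re‖ₑ ^ p + ‖z.im‖ₑ ^ p) := by
    refine (ENNReal.rpow_le_rpow ?_ (by linarith)).trans
      (ENNReal.rpow_add_le_mul_rpow_add_rpow _ _ hp)
    simp only [← ofReal_norm, ← ENNReal.ofReal_add (norm_nonneg _) (norm_nonneg _)]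
    exact ENNReal.ofReal_le_ofReal (Complex.norm_le_abs_re_add_abs_im z)
  calc ∫⁻ ω, ‖Z ω‖ₑ ^ p ∂P
      ≤ ∫⁻ ω, 2 ^ (p - 1) * (‖(Z ω).re‖ₑ ^ p + ‖(Z ω).im‖ₑ ^ p) ∂P := lintegral_mono fun ω => hpt _
    _ = 2 ^ (p - 1) * (∫⁻ x, ‖x‖ₑ ^ p ∂ν + ∫⁻ x, ‖x‖ₑ ^ p ∂ν) := by
        rw [lintegral_const_mul' _ _ (by simp), lintegral_add_left' (by fun_prop),
          ← lintegral_map' (f := fun x : ℝ => ‖x‖ₑ ^ p) (by fun_prop) hre',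
          ← lintegral_map' (f := fun x : ℝ => ‖x‖ₑ ^ p) (by fun_prop) him', hre, him]
    _ = 2 ^ p * ∫⁻ x, ‖x‖ₑ ^ p ∂ν := by
        have h2 : (2 : ℝ≥0∞) ^ (p - 1) * 2 = 2 ^ p := by
          simpa using (ENNReal.rpow_add (p - 1) 1 two_ne_zero ENNReal.ofNat_ne_top).symm
        rw [← two_mul, ← mul_assoc, h2]

end ComplexRandomVariable

namespace IsStdComplexGaussianFamily

variable {Ω : Type*} [MeasurableSpace Ω] {P : Measure Ω} {g : ℤ → Ω → ℂ}

lemma map_re (hg : IsStdComplexGaussianFamily P g) {n : ℤ} (hn : n ≠ 0) :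
    P.map (fun ω => (g n ω).re) = gaussianReal 0 1 := by
  simpa using hg.2 ⟨⟨n, hn⟩, true⟩

lemma map_im (hg : IsStdComplexGaussianFamily P g) {n : ℤ} (hn : n ≠ 0) :
    P.map (fun ω => (g n ω).im) = gaussianReal 0 1 := by
  simpa using hg.2 ⟨⟨n, hn⟩, false⟩

lemma ae_tsum_mul_enorm_rpow_lt_top (hg : IsStdComplexGaussianFamily P g) {p : ℝ} (hp : 1 ≤ p)
    {w : ℤ → ℝ≥0∞} (hw0 : w 0 = 0) (hw : ∑' n, w n ≠ ⊤) :
    ∀ᵐ ω ∂P, ∑' n, w n * ‖g n ω‖ₑ ^ p < ⊤ := by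
  set C := 2 ^ p * ∫⁻ x, ‖x‖ₑ ^ p ∂gaussianReal 0 1
  have hC : C ≠ ⊤ := ENNReal.mul_ne_top (by simp)
    (lintegral_enorm_rpow_gaussianReal_lt_top 0 1 (by linarith)).ne
  have hmeas (n : ℤ) : AEMeasurable (fun ω => w n * ‖g n ω‖ₑ ^ p) P := by
    rcases eq_or_ne n 0 with rfl | hn
    · simp [hw0]
    · have := aemeasurable_of_map_re_im (hg.map_re hn) (hg.map_im hn)
      fun_prop
  have hint (n : ℤ) : ∫⁻ ω, w n * ‖g n ω‖ₑ ^ p ∂P ≤ w n * C := by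
    rcases eq_or_ne n 0 with rfl | hn
    · simp [hw0]
    · have := aemeasurable_of_map_re_im (hg.map_re hn) (hg.map_im hn)
      rw [lintegral_const_mul'' _ (by fun_prop)]
      gcongr
      exact lintegral_enorm_rpow_le_of_map_re_im hp (hg.map_re hn) (hg.map_im hn)
  refine ae_lt_top' (AEMeasurable.tsum hmeas) (ne_top_of_le_ne_top ?_
    ((lintegral_tsum hmeas).trans_le (ENNReal.tsum_le_tsum hint)))
  rw [ENNReal.tsum_mul_right]
  exact ENNReal.mul_ne_top hw hC

end IsStdComplexGaussianFamily

lemma summable_mul_norm_rpow_of_tsum_ne_top {ι E : Type*} [SeminormedAddCommGroup E]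
    {c : ι → ℝ} (hc : ∀ i, 0 ≤ c i) {x : ι → E} {p : ℝ} (hp : 0 ≤ p)
    (h : ∑' i, ENNReal.ofReal (c i) * ‖x i‖ₑ ^ p ≠ ⊤) : Summable fun i => c i * ‖x i‖ ^ p := by
  convert ENNReal.summable_toReal h using 2 with i
  rw [← ofReal_norm, ENNReal.ofReal_rpow_of_nonneg (norm_nonneg _) hp, ← ENNReal.ofReal_mul (hc i),
    ENNReal.toReal_ofReal (by have := hc i; positivity)]

theorem brownian_in_FourierBesov_general
    {Ω : Type*} [MeasurableSpace Ω] (P : Measure Ω)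
    (g : ℤ → Ω → ℂ) (hg : IsStdComplexGaussianFamily P g)
    (p s : ℝ) (q : ENNReal) (hp : 1 ≤ p) (hq : 1 ≤ q) (hsp : (s - 1) * p < -1) :
    ∀ᵐ ω ∂P, fbNorm (fun n => ‖g n ω‖) p s q < ⊤ := by
  have hp0 : 0 < p := by linarith
  obtain ⟨ε, hε, hεs⟩ : ∃ ε > 0, (s - 1) * p + ε < -1 :=
    ⟨(-1 - (s - 1) * p) / 2, by linarith, by linarith⟩
  have hw := summable_abs_rpow_mul_fbWeight hp0.ne' hεs
  have hw_nonneg (n : ℤ) : 0 ≤ |(n : ℝ)| ^ ε * fbWeight p s n := by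
    have := fbWeight_nonneg p s n; positivity
  filter_upwards [hg.ae_tsum_mul_enorm_rpow_lt_top hp
    (w := fun n => ENNReal.ofReal (|(n : ℝ)| ^ ε * fbWeight p s n))
    (by simp [fbWeight_zero hp0.ne'])
    (by rw [← ENNReal.ofReal_tsum_of_nonneg hw_nonneg hw]; exact ENNReal.ofReal_ne_top)] with ω hω
  refine fbNorm_lt_top_of_summable (fun n => norm_nonneg _) hp0 hε (zero_lt_one.trans_le hq) ?_
  simpa only [mul_assoc] using summable_mul_norm_rpow_of_tsum_ne_top hw_nonneg hp0.le hω.ne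

/-- If `1 ≤ p < ∞`, `1 ≤ q ≤ ∞` and `(s-1)p < -1`, then the Fourier–Wiener series
belongs almost surely to the Fourier–Besov space `b̂^s_{p,q}(𝕋)`. -/
theorem brownian_in_FourierBesov
    {Ω : Type*} [MeasurableSpace Ω] (P : Measure Ω) [IsProbabilityMeasure P]
    (g : ℤ → Ω → ℂ) (hg : IsStdComplexGaussianFamily P g)
    (p s : ℝ) (q : ENNReal) (hp : 1 ≤ p) (hq : 1 ≤ q) (hsp : (s - 1) * p < -1) :
    ∀ᵐ ω ∂P, fbNorm (fun n => ‖g n ω‖) p s q < ⊤ :=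
  brownian_in_FourierBesov_general P g hg p s q hp hq hsp
end
end

section
/- Let 0 < δ < 1/2. Then almost surely lim_{j→∞} 2^{2δj} · ( max_{|n|∼2^j} |g_n|² ) / ( Σ_{|n|∼2^j} |g_n|² ) = 0; i.e., along dyadic blocks M = 2^j, the ratio M^{2δ} max_{|n|∼M}|g_n|² / Σ_{|n|∼M}|g_n|² tends to zero almost surely. -/
open MeasureTheory ProbabilityTheory Filter

noncomputable section

/-!
Borel–Cantelli, twice. Write `|gₙ|² = aₙ² + bₙ²` with `aₙ, bₙ` independent standard
Gaussians; their squares satisfy `E[exp (t a²)] = (1 - 2t)^{-1/2}` for `t < 1/2`.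
Chernoff's bound at `t = 1/4` gives `P(a² ≥ 4j) ≤ √2 e^{-j}`, so by a union bound over the
`O(2^j)` variables of the `j`-th block, almost surely eventually `max_{|n|∼2^j} |gₙ|² < 8j`.
Chernoff's bound at `t = -1` gives `P(Σ_{|n|∼2^j} |gₙ|² ≤ N) ≤ (e/3)^N` for a block of size
`N ≥ 2^j`, so almost surely eventually `Σ_{|n|∼2^j} |gₙ|² > 2^j`. The ratio is then at most
`8j · 2^{(2δ-1)j} → 0`.
-/

open Real Finset
open scoped Topology

lemma ae_eventually_notMem_of_measureReal_le_geometric {Ω : Type*} [MeasurableSpace Ω]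
    {P : Measure Ω} [IsFiniteMeasure P] {E : ℕ → Set Ω} {C r : ℝ} (hr0 : 0 ≤ r) (hr1 : r < 1)
    (hE : ∀ j, P.real (E j) ≤ C * r ^ j) :
    ∀ᵐ ω ∂P, ∀ᶠ j in atTop, ω ∉ E j := by
  have hsum : Summable fun j => P.real (E j) :=
    .of_nonneg_of_le (fun _ => measureReal_nonneg) hE
      ((summable_geometric_of_lt_one hr0 hr1).mul_left C)
  refine ae_eventually_notMem ?_
  have hreal : ∀ j, P (E j) = ENNReal.ofReal (P.real (E j)) :=
    fun j => (ofReal_measureReal (measure_ne_top P _)).symm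
  simp_rw [hreal]
  rw [← ENNReal.ofReal_tsum_of_nonneg (fun _ => measureReal_nonneg) hsum]
  exact ENNReal.ofReal_ne_top

lemma mgf_sq_gaussianReal {t : ℝ} (ht : t < 1 / 2) :
    mgf (fun x => x ^ 2) (gaussianReal 0 1) t = (√(1 - 2 * t))⁻¹ := by
  have hdensity : ∀ x, gaussianPDFReal 0 1 x • exp (t * x ^ 2)
      = (√(2 * π))⁻¹ * exp (-(1 / 2 - t) * x ^ 2) := by
    intro x
    rw [gaussianPDFReal, smul_eq_mul, mul_assoc, ← exp_add]
    push_cast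
    ring_nf
  rw [mgf, integral_gaussianReal_eq_integral_smul one_ne_zero]
  simp_rw [hdensity]
  rw [integral_const_mul, integral_gaussian,
    show π / (1 / 2 - t) = 2 * π / (1 - 2 * t) by field_simp,
    sqrt_div' _ (by linarith : 0 ≤ 1 - 2 * t)]
  have : √(2 * π) ≠ 0 := by positivity
  field_simp

section StandardGaussian

variable {Ω : Type*} [MeasurableSpace Ω] {P : Measure Ω} {Y : Ω → ℝ} {t : ℝ}

lemma aemeasurable_of_map_eq_gaussianReal (hY : P.map Y = gaussianReal 0 1) :
    AEMeasurable Y P :=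
  .of_map_ne_zero (hY ▸ IsProbabilityMeasure.ne_zero _)

lemma mgf_sq_of_map_eq_gaussianReal (hY : P.map Y = gaussianReal 0 1) (ht : t < 1 / 2) :
    mgf (fun ω => Y ω ^ 2) P t = (√(1 - 2 * t))⁻¹ := by
  rw [← mgf_sq_gaussianReal ht, ← hY,
    mgf_map (aemeasurable_of_map_eq_gaussianReal hY) (by fun_prop)]
  rfl

variable [IsProbabilityMeasure P]

lemma integrable_exp_mul_sq_of_map_eq_gaussianReal
    (hY : P.map Y = gaussianReal 0 1) (ht : t < 1 / 2) :
    Integrable (fun ω => exp (t * Y ω ^ 2)) P := by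
  rw [← mgf_pos_iff, mgf_sq_of_map_eq_gaussianReal hY ht]
  have : 0 < 1 - 2 * t := by linarith
  positivity

lemma measureReal_le_sq_le_of_map_eq_gaussianReal
    (hY : P.map Y = gaussianReal 0 1) (a : ℝ) :
    P.real {ω | a ≤ Y ω ^ 2} ≤ √2 * exp (-a / 4) := by
  have ht : (1 / 4 : ℝ) < 1 / 2 := by norm_num
  calc P.real {ω | a ≤ Y ω ^ 2}
      ≤ exp (-(1 / 4) * a) * mgf (fun ω => Y ω ^ 2) P (1 / 4) :=
        measure_ge_le_exp_mul_mgf a (by norm_num)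
          (integrable_exp_mul_sq_of_map_eq_gaussianReal hY ht)
    _ = √2 * exp (-a / 4) := by
        rw [mgf_sq_of_map_eq_gaussianReal hY ht, show (1 : ℝ) - 2 * (1 / 4) = 2⁻¹ by norm_num,
          sqrt_inv, inv_inv, mul_comm]
        ring_nf

end StandardGaussian

section StandardGaussianFamily

variable {Ω : Type*} [MeasurableSpace Ω] {P : Measure Ω} [IsProbabilityMeasure P]
  {ι : Type*} {Y : ι → Ω → ℝ}

lemma measureReal_sum_sq_le_half_card_le (hind : iIndepFun Y P)
    (hY : ∀ i, P.map (Y i) = gaussianReal 0 1) (s : Finset ι) :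
    P.real {ω | ∑ i ∈ s, Y i ω ^ 2 ≤ #s / 2} ≤ √(exp 1 / 3) ^ #s := by
  set Z : ι → Ω → ℝ := fun i ω => Y i ω ^ 2
  have hZind : iIndepFun Z P := hind.comp (fun _ x => x ^ 2) fun _ => by fun_prop
  have hZ_meas : ∀ i, AEMeasurable (Z i) P :=
    fun i => (aemeasurable_of_map_eq_gaussianReal (hY i)).pow_const 2
  have hmgf : mgf (∑ i ∈ s, Z i) P (-1) = (√3)⁻¹ ^ #s := by
    rw [hZind.mgf_sum₀ hZ_meas, prod_eq_pow_card fun i _ => ?_]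
    rw [mgf_sq_of_map_eq_gaussianReal (hY i) (by norm_num)]
    norm_num
  have hint : Integrable (fun ω => exp (-1 * (∑ i ∈ s, Z i) ω)) P := by
    rw [← mgf_pos_iff, hmgf]
    positivity
  calc P.real {ω | ∑ i ∈ s, Y i ω ^ 2 ≤ #s / 2}
      = P.real {ω | (∑ i ∈ s, Z i) ω ≤ #s / 2} := by simp only [Z, Finset.sum_apply]
    _ ≤ exp (-(-1) * (#s / 2)) * mgf (∑ i ∈ s, Z i) P (-1) :=
        measure_le_le_exp_mul_mgf _ (by norm_num) hint
    _ = √(exp 1 / 3) ^ #s := by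
        rw [hmgf, sqrt_div' _ (by norm_num), ← exp_half, div_pow, ← exp_nat_mul, inv_pow,
          ← div_eq_mul_inv]
        ring_nf

lemma ae_eventually_forall_sq_lt (hY : ∀ i, P.map (Y i) = gaussianReal 0 1)
    {s : ℕ → Finset ι} {C : ℝ} (hs : ∀ j, (#(s j) : ℝ) ≤ C * 2 ^ j) :
    ∀ᵐ ω ∂P, ∀ᶠ j in atTop, ∀ i ∈ s j, Y i ω ^ 2 < 4 * j := by
  have hr1 : 2 * exp (-1) < 1 := by
    rw [exp_neg, ← div_eq_mul_inv, div_lt_one (exp_pos 1)]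
    linarith [add_one_lt_exp one_ne_zero]
  have hE := ae_eventually_notMem_of_measureReal_le_geometric (P := P)
    (E := fun j => ⋃ i ∈ s j, {ω | 4 * j ≤ Y i ω ^ 2}) (C := C * √2)
    (r := 2 * exp (-1)) (by positivity) hr1 fun j => ?_
  · filter_upwards [hE] with ω hω
    filter_upwards [hω] with j hj
    simpa using hj
  calc P.real (⋃ i ∈ s j, {ω | 4 * j ≤ Y i ω ^ 2})
      ≤ ∑ i ∈ s j, P.real {ω | 4 * j ≤ Y i ω ^ 2} :=
        measureReal_biUnion_finset_le (s j) fun i => {ω | 4 * (j : ℝ) ≤ Y i ω ^ 2}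
    _ ≤ ∑ i ∈ s j, √2 * exp (-(4 * j) / 4) :=
        sum_le_sum fun i _ => measureReal_le_sq_le_of_map_eq_gaussianReal (hY i) _
    _ = #(s j) * (√2 * exp (-1) ^ j) := by
        rw [sum_const, nsmul_eq_mul, ← exp_nat_mul]
        ring_nf
    _ ≤ C * 2 ^ j * (√2 * exp (-1) ^ j) := by gcongr; exact hs j
    _ = C * √2 * (2 * exp (-1)) ^ j := by ring

lemma ae_eventually_half_card_lt_sum_sq (hind : iIndepFun Y P)
    (hY : ∀ i, P.map (Y i) = gaussianReal 0 1) {s : ℕ → Finset ι} (hs : ∀ j, j ≤ #(s j)) :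
    ∀ᵐ ω ∂P, ∀ᶠ j in atTop, (#(s j) : ℝ) / 2 < ∑ i ∈ s j, Y i ω ^ 2 := by
  have hr1 : √(exp 1 / 3) < 1 := by
    rw [sqrt_lt' one_pos, one_pow, div_lt_one three_pos]
    linarith [exp_one_lt_d9]
  have hE := ae_eventually_notMem_of_measureReal_le_geometric (P := P)
    (E := fun j => {ω | ∑ i ∈ s j, Y i ω ^ 2 ≤ #(s j) / 2}) (C := 1)
    (r := √(exp 1 / 3)) (by positivity) hr1 fun j => ?_
  · filter_upwards [hE] with ω hω
    filter_upwards [hω] with j hj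
    simpa using hj
  calc P.real {ω | ∑ i ∈ s j, Y i ω ^ 2 ≤ #(s j) / 2}
      ≤ √(exp 1 / 3) ^ #(s j) := measureReal_sum_sq_le_half_card_le hind hY _
    _ ≤ 1 * √(exp 1 / 3) ^ j := by
        rw [one_mul]
        exact pow_le_pow_of_le_one (by positivity) hr1.le (hs j)

end StandardGaussianFamily

lemma dyadicBlock_eq (j : ℕ) :
    dyadicBlock j = Ico (-2 ^ j) (-(2 ^ j / 2)) ∪ Ioc (2 ^ j / 2) (2 ^ j) := by
  have : (0 : ℤ) < 2 ^ j := by positivity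
  ext n
  simp only [dyadicBlock, mem_filter, mem_Icc, mem_union, mem_Ico, mem_Ioc]
  rcases abs_cases n with ⟨h, _⟩ | ⟨h, _⟩ <;> rw [h] <;> omega

lemma zero_notMem_dyadicBlock (j : ℕ) : (0 : ℤ) ∉ dyadicBlock j := by
  have : (0 : ℤ) < 2 ^ j := by positivity
  simp only [dyadicBlock_eq, mem_union, mem_Ico, mem_Ioc]
  omega

lemma card_dyadicBlock (j : ℕ) : (#(dyadicBlock j) : ℤ) = 2 * (2 ^ j - 2 ^ j / 2) := by
  have : (0 : ℤ) < 2 ^ j := by positivity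
  rw [dyadicBlock_eq, card_union_of_disjoint, Int.card_Ico, Int.card_Ioc]
  · omega
  · rw [disjoint_left]
    intro n h1 h2
    simp only [mem_Ico, mem_Ioc] at h1 h2
    omega

lemma two_pow_le_card_dyadicBlock (j : ℕ) : 2 ^ j ≤ #(dyadicBlock j) := by
  have := card_dyadicBlock j
  zify
  omega

lemma card_dyadicBlock_le (j : ℕ) : #(dyadicBlock j) ≤ 2 * 2 ^ j := by
  have : (0 : ℤ) < 2 ^ j := by positivity
  have := card_dyadicBlock j
  zify
  omega

section ComplexFamily

variable {Ω : Type*} {g : ℤ → Ω → ℂ}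

/-- `IsStdComplexGaussianFamily P g` says that the `reImParts g i` are independent standard
Gaussians. -/
def reImParts (g : ℤ → Ω → ℂ) (i : {n : ℤ // n ≠ 0} × Bool) (ω : Ω) : ℝ :=
  if i.2 then (g i.1 ω).re else (g i.1 ω).im

def reImIndex (s : Finset ℤ) : Finset ({n : ℤ // n ≠ 0} × Bool) :=
  s.subtype (· ≠ 0) ×ˢ univ

lemma mk_mem_reImIndex {s : Finset ℤ} {n : ℤ} (hn : n ∈ s) (h : n ≠ 0) (b : Bool) :
    (⟨n, h⟩, b) ∈ reImIndex s := by
  simpa [reImIndex] using hn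

lemma card_reImIndex {s : Finset ℤ} (hs : 0 ∉ s) : #(reImIndex s) = 2 * #s := by
  rw [reImIndex, card_product, card_subtype,
    filter_true_of_mem fun n hn => ne_of_mem_of_not_mem hn hs]
  simp [mul_comm]

lemma sq_norm_eq_sum_reImParts_sq (g : ℤ → Ω → ℂ) (n : {n : ℤ // n ≠ 0}) (ω : Ω) :
    ‖g n ω‖ ^ 2 = ∑ b : Bool, reImParts g (n, b) ω ^ 2 := by
  rw [Fintype.sum_bool, Complex.sq_norm, Complex.normSq_apply]
  simp [reImParts, sq]

lemma sum_reImParts_sq {s : Finset ℤ} (hs : 0 ∉ s) (g : ℤ → Ω → ℂ) (ω : Ω) :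
    ∑ i ∈ reImIndex s, reImParts g i ω ^ 2 = ∑ n ∈ s, ‖g n ω‖ ^ 2 := by
  rw [reImIndex, sum_product,
    ← sum_subtype_of_mem (fun n => ‖g n ω‖ ^ 2) (p := (· ≠ 0))
      fun n hn => ne_of_mem_of_not_mem hn hs]
  simp_rw [sq_norm_eq_sum_reImParts_sq]

variable [MeasurableSpace Ω] {P : Measure Ω} [IsProbabilityMeasure P] {s : ℕ → Finset ℤ}

lemma IsStdComplexGaussianFamily.ae_eventually_forall_sq_norm_lt
    (hg : IsStdComplexGaussianFamily P g) (hs0 : ∀ j, 0 ∉ s j) {C : ℝ}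
    (hs : ∀ j, (#(s j) : ℝ) ≤ C * 2 ^ j) :
    ∀ᵐ ω ∂P, ∀ᶠ j in atTop, ∀ n ∈ s j, ‖g n ω‖ ^ 2 < 8 * j := by
  have hparts := ae_eventually_forall_sq_lt (Y := reImParts g) hg.2
    (s := fun j => reImIndex (s j)) (C := 2 * C) fun j => by
      rw [card_reImIndex (hs0 j)]
      push_cast
      linarith [hs j]
  filter_upwards [hparts] with ω hω
  filter_upwards [hω] with j hj n hn
  have h0 : n ≠ 0 := ne_of_mem_of_not_mem hn (hs0 j)
  rw [sq_norm_eq_sum_reImParts_sq g ⟨n, h0⟩, Fintype.sum_bool]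
  linarith [hj _ (mk_mem_reImIndex hn h0 true), hj _ (mk_mem_reImIndex hn h0 false)]

lemma IsStdComplexGaussianFamily.ae_eventually_card_lt_sum_sq_norm
    (hg : IsStdComplexGaussianFamily P g) (hs0 : ∀ j, 0 ∉ s j) (hs : ∀ j, j ≤ #(s j)) :
    ∀ᵐ ω ∂P, ∀ᶠ j in atTop, (#(s j) : ℝ) < ∑ n ∈ s j, ‖g n ω‖ ^ 2 := by
  have hparts := ae_eventually_half_card_lt_sum_sq (Y := reImParts g) hg.1 hg.2
    (s := fun j => reImIndex (s j)) fun j => by rw [card_reImIndex (hs0 j)]; linarith [hs j]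
  filter_upwards [hparts] with ω hω
  filter_upwards [hω] with j hj
  rwa [sum_reImParts_sq (hs0 j), card_reImIndex (hs0 j), Nat.cast_mul, Nat.cast_two,
    mul_div_cancel_left₀ _ two_ne_zero] at hj

end ComplexFamily

lemma tendsto_two_rpow_mul_div_of_eventually_le {δ : ℝ} (hδ : δ < 1 / 2) {M S : ℕ → ℝ}
    {C : ℝ} (hM0 : ∀ j, 0 ≤ M j) (hM : ∀ᶠ j in atTop, M j ≤ C * j)
    (hS : ∀ᶠ j in atTop, 2 ^ j ≤ S j) :
    Tendsto (fun j : ℕ => (2 : ℝ) ^ (2 * δ * j) * M j / S j) atTop (𝓝 0) := by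
  set ρ : ℝ := 2 ^ (2 * δ - 1)
  have hρ0 : 0 ≤ ρ := by positivity
  have hρ1 : ρ < 1 := rpow_lt_one_of_one_lt_of_neg one_lt_two (by linarith)
  have hρ : ∀ j : ℕ, (2 : ℝ) ^ (2 * δ * j) / 2 ^ j = ρ ^ j := by
    intro j
    rw [← rpow_natCast, ← rpow_natCast, ← rpow_mul zero_le_two, ← rpow_sub zero_lt_two]
    ring_nf
  have hlim : Tendsto (fun j : ℕ => C * (j * ρ ^ j)) atTop (𝓝 0) := by
    simpa using (tendsto_self_mul_const_pow_of_lt_one hρ0 hρ1).const_mul C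
  refine squeeze_zero' ?_ ?_ hlim
  · filter_upwards [hS] with j hSj
    have : 0 < S j := lt_of_lt_of_le (by positivity) hSj
    exact div_nonneg (mul_nonneg (by positivity) (hM0 j)) this.le
  · filter_upwards [hM, hS] with j hMj hSj
    calc (2 : ℝ) ^ (2 * δ * j) * M j / S j ≤ (2 : ℝ) ^ (2 * δ * j) * M j / 2 ^ j := by
          have := hM0 j
          gcongr
      _ ≤ (2 : ℝ) ^ (2 * δ * j) * (C * j) / 2 ^ j := by gcongr
      _ = C * (j * ρ ^ j) := by rw [← hρ]; ring

theorem dyadic_block_max_over_sum_tendsto_zero_general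
    {Ω : Type*} [MeasurableSpace Ω] (P : Measure Ω) [IsProbabilityMeasure P]
    (g : ℤ → Ω → ℂ) (hg : IsStdComplexGaussianFamily P g)
    (δ : ℝ) (hδ : δ < 1 / 2) :
    ∀ᵐ ω ∂P,
      Tendsto
        (fun j : ℕ =>
          (2 : ℝ) ^ (2 * δ * (j : ℝ)) *
            (⨆ n ∈ dyadicBlock j, ‖g n ω‖ ^ 2) /
              ∑ n ∈ dyadicBlock j, ‖g n ω‖ ^ 2)
        atTop (nhds 0) := by
  have hmax := hg.ae_eventually_forall_sq_norm_lt zero_notMem_dyadicBlock (C := 2)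
    fun j => by exact_mod_cast card_dyadicBlock_le j
  have hsum := hg.ae_eventually_card_lt_sum_sq_norm zero_notMem_dyadicBlock
    fun j => Nat.lt_two_pow_self.le.trans (two_pow_le_card_dyadicBlock j)
  filter_upwards [hmax, hsum] with ω hmaxω hsumω
  refine tendsto_two_rpow_mul_div_of_eventually_le hδ (C := 8)
    (fun j => Real.iSup_nonneg fun n => Real.iSup_nonneg fun _ => sq_nonneg _) ?_ ?_
  · filter_upwards [hmaxω] with j hj
    exact Real.iSup_le (fun n => Real.iSup_le (fun hn => (hj n hn).le) (by positivity))
      (by positivity)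
  · filter_upwards [hsumω] with j hj
    exact le_trans (by exact_mod_cast two_pow_le_card_dyadicBlock j) hj.le

/-- For `0 < δ < 1/2`, almost surely
`2^{2δj} · max_{|n|∼2^j} |gₙ|² / Σ_{|n|∼2^j} |gₙ|² → 0` as `j → ∞`. -/
theorem dyadic_block_max_over_sum_tendsto_zero
    {Ω : Type*} [MeasurableSpace Ω] (P : Measure Ω) [IsProbabilityMeasure P]
    (g : ℤ → Ω → ℂ) (hg : IsStdComplexGaussianFamily P g)
    (δ : ℝ) (hδ0 : 0 < δ) (hδ : δ < 1 / 2) :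
    ∀ᵐ ω ∂P,
      Tendsto
        (fun j : ℕ =>
          (2 : ℝ) ^ (2 * δ * (j : ℝ)) *
            (⨆ n ∈ dyadicBlock j, ‖g n ω‖ ^ 2) /
              ∑ n ∈ dyadicBlock j, ‖g n ω‖ ^ 2)
        atTop (nhds 0) :=
  dyadic_block_max_over_sum_tendsto_zero_general P g hg δ hδ
end
end
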